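/- arXiv:1712.08954 — 6 statements merged into one kernel-verified Lean document; each statement's English description precedes it below -/
import Mathlib

section
/- The player-compatibility relation is transitive: if player i is more compatible with strategy s_i* than player j is with s_j*, and player j is more compatible with s_j* than player k is with s_k*, then player i is more compatible with s_i* than player k is with s_k*. -/
open scoped Classical

noncomputable section

variable {ι : Type} [Fintype ι] [DecidableEq ι] {S : ι → Type} [∀ i, Fintype (S i)]

/-- A full-support correlated strategy profile on `S = ∏ i, S i`. -/
def FullSupport (σ : (∀ i, S i) → ℝ) : Prop :=
  (∀ s, 0 < σ s) ∧ ∑ s, σ s = 1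

/-- Expected payoff to player `i` from playing `si` against the correlated profile `σ`. -/
def expPay (U : ∀ _i : ι, (∀ j, S j) → ℝ) (i : ι) (si : S i) (σ : (∀ j, S j) → ℝ) : ℝ :=
  ∑ s, σ s * U i (Function.update s i si)

/-- `σ` and `τ` have the same marginal on the strategies of players other than `i` and `j`. -/
def SameMarginal (i j : ι) (σ τ : (∀ k, S k) → ℝ) : Prop :=
  ∀ s : ∀ k, S k,
    (∑ si : S i, ∑ sj : S j, σ (Function.update (Function.update s i si) j sj)) =
    (∑ si : S i, ∑ sj : S j, τ (Function.update (Function.update s i si) j sj))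

/-- Player `i` is more compatible with `si` than player `j` is with `sj`:
whenever `sj` is weakly optimal for `j` against a full-support correlated profile `σ`,
`si` is strictly optimal for `i` against every full-support correlated profile `τ`
with the same marginal as `σ` on the players other than `i` and `j`. -/
def MoreCompatible (U : ∀ _i : ι, (∀ j, S j) → ℝ) (i j : ι) (si : S i) (sj : S j) : Prop :=
  ∀ σ : (∀ k, S k) → ℝ, FullSupport σ →
    (∀ sj' : S j, expPay U j sj' σ ≤ expPay U j sj σ) →
    ∀ τ : (∀ k, S k) → ℝ, FullSupport τ → SameMarginal i j σ τ →
      ∀ si' : S i, si' ≠ si → expPay U i si' τ < expPay U i si τ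

/-! Given `σ` with `sₖ` optimal for `k` and `τ` agreeing with `σ` off `{i, k}`, glue the
`(-k)`-marginal of `σ` to the `(-i,-j)`-marginal of `τ`, conditionally independently over the
common `(-i,-j,-k)`-marginal. The glued profile `ρ` agrees with `σ` off `{j, k}`, so `sⱼ` is
optimal for `j` against `ρ`; and it agrees with `τ` off `{i, j}`, so `sᵢ` is strictly optimal
for `i` against `τ`. -/

open Function

set_option linter.unusedSectionVars false

/-- The unnormalised marginal on the coordinates other than `i`, viewed as a function on all
profiles that ignores coordinate `i`. -/
def sumOut (i : ι) (F : (∀ l, S l) → ℝ) : (∀ l, S l) → ℝ :=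
  fun s => ∑ x : S i, F (update s i x)

def InvariantAt (i : ι) (F : (∀ l, S l) → ℝ) : Prop :=
  ∀ s (x : S i), F (update s i x) = F s

section sumOut

variable {i j k : ι} {F G : (∀ l, S l) → ℝ}

theorem sameMarginal_iff {σ τ : (∀ l, S l) → ℝ} :
    SameMarginal i j σ τ ↔ sumOut i (sumOut j σ) = sumOut i (sumOut j τ) :=
  funext_iff.symm

theorem invariantAt_sumOut (i : ι) (F : (∀ l, S l) → ℝ) : InvariantAt i (sumOut i F) :=
  fun s x => by simp only [sumOut, update_idem]

theorem InvariantAt.inv (hF : InvariantAt i F) : InvariantAt i F⁻¹ :=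
  fun s x => congrArg (·⁻¹) (hF s x)

theorem sumOut_comm (i j : ι) (F : (∀ l, S l) → ℝ) :
    sumOut i (sumOut j F) = sumOut j (sumOut i F) := by
  rcases eq_or_ne i j with rfl | hij
  · rfl
  · funext s
    simp only [sumOut, update_comm hij]
    exact Finset.sum_comm

theorem invariantAt_sumOut_sumOut (i j : ι) (F : (∀ l, S l) → ℝ) :
    InvariantAt j (sumOut i (sumOut j F)) :=
  sumOut_comm j i F ▸ invariantAt_sumOut j _

theorem sumOut_mul_left (hG : InvariantAt i G) (F : (∀ l, S l) → ℝ) :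
    sumOut i (G * F) = G * sumOut i F := by
  funext s
  simp only [sumOut, Pi.mul_apply, hG s, Finset.mul_sum]

theorem sumOut_mul_right (hG : InvariantAt i G) (F : (∀ l, S l) → ℝ) :
    sumOut i (F * G) = sumOut i F * G := by
  rw [mul_comm, sumOut_mul_left hG, mul_comm]

theorem sumOut_pos (hF : ∀ s, 0 < F s) (s : ∀ l, S l) : 0 < sumOut i F s :=
  Finset.sum_pos (fun _ _ => hF _) ⟨s i, Finset.mem_univ _⟩

theorem sum_sumOut (i : ι) (F : (∀ l, S l) → ℝ) :
    ∑ s, sumOut i F s = Fintype.card (S i) * ∑ s, F s := by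
  have swap : ∑ p : S i × (∀ l, S l), F (update p.2 i p.1) = ∑ p : S i × (∀ l, S l), F p.2 :=
    Fintype.sum_bijective (fun p => (p.2 i, update p.2 i p.1))
      (Function.Involutive.bijective fun p => by simp [update_idem]) _ _ fun _ => rfl
  rw [Fintype.sum_prod_type, Finset.sum_comm, Fintype.sum_prod_type] at swap
  simp only [sumOut, swap, Finset.sum_const, Finset.card_univ, nsmul_eq_mul]

theorem sum_eq_of_sumOut_eq [Nonempty (∀ l, S l)] (h : sumOut i F = sumOut i G) :
    ∑ s, F s = ∑ s, G s := by
  have : Nonempty (S i) := ⟨Classical.arbitrary (∀ l, S l) i⟩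
  have hcard : (Fintype.card (S i) : ℝ) ≠ 0 := Nat.cast_ne_zero.mpr Fintype.card_ne_zero
  exact mul_left_cancel₀ hcard (by rw [← sum_sumOut, ← sum_sumOut, h])

theorem exists_glue {σ τ : (∀ l, S l) → ℝ}
    (hσ : ∀ s, 0 < σ s) (hτ : ∀ s, 0 < τ s)
    (h : sumOut j (sumOut i (sumOut k σ)) = sumOut j (sumOut i (sumOut k τ))) :
    ∃ ρ : (∀ l, S l) → ℝ, (∀ s, 0 < ρ s) ∧ sumOut k ρ = sumOut k σ ∧
      sumOut i (sumOut j ρ) = sumOut i (sumOut j τ) := by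
  set A := sumOut k σ
  set B := sumOut i (sumOut j τ)
  set D := sumOut i (sumOut j A)
  have hDB : D = sumOut k B :=
    (sumOut_comm i j A).trans (h.trans (by rw [sumOut_comm i k, sumOut_comm j k, sumOut_comm j i]))
  have hDpos : ∀ s, 0 < D s := sumOut_pos (sumOut_pos (sumOut_pos hσ))
  have hDD : D * D⁻¹ = 1 := funext fun s => mul_inv_cancel₀ (hDpos s).ne'
  have hDi : InvariantAt i D⁻¹ := (invariantAt_sumOut i _).inv
  have hDj : InvariantAt j D⁻¹ := (invariantAt_sumOut_sumOut i j A).inv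
  have hDk : InvariantAt k D⁻¹ := (hDB ▸ invariantAt_sumOut k B).inv
  refine ⟨A * B * D⁻¹, fun s => ?_, ?_, ?_⟩
  · exact mul_pos (mul_pos (sumOut_pos hσ s) (sumOut_pos (sumOut_pos hτ) s))
      (inv_pos.mpr (hDpos s))
  · rw [sumOut_mul_right hDk, sumOut_mul_left (invariantAt_sumOut k σ), ← hDB, mul_assoc, hDD,
      mul_one]
  · have hBj : InvariantAt j B := invariantAt_sumOut_sumOut i j τ
    rw [mul_comm A, mul_assoc, sumOut_mul_left hBj, sumOut_mul_left (invariantAt_sumOut i _),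
      sumOut_mul_right hDj, sumOut_mul_right hDi, hDD, mul_one]

end sumOut

theorem FullSupport.nonempty {σ : (∀ l, S l) → ℝ} (hσ : FullSupport σ) :
    Nonempty (∀ l, S l) := by
  by_contra hempty
  rw [not_nonempty_iff] at hempty
  simpa using hσ.2

theorem compatibility_trans_general
    (U : ∀ _i : ι, (∀ j, S j) → ℝ)
    (i j k : ι)
    (si : S i) (sj : S j) (sk : S k)
    (h1 : MoreCompatible U i j si sj) (h2 : MoreCompatible U j k sj sk) :
    MoreCompatible U i k si sk := by
  intro σ hσ hk τ hτ hmarg si' hne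
  obtain ⟨ρ, hρpos, hρk, hρij⟩ := exists_glue hσ.1 hτ.1
    (congrArg (sumOut j) (sameMarginal_iff.mp hmarg))
  have := hσ.nonempty
  have hρ : FullSupport ρ := ⟨hρpos, by rw [sum_eq_of_sumOut_eq hρk, hσ.2]⟩
  have hj : ∀ sj', expPay U j sj' ρ ≤ expPay U j sj ρ := fun sj' => by
    rcases eq_or_ne sj' sj with rfl | hne_sj
    · exact le_rfl
    · exact (h2 σ hσ hk ρ hρ (sameMarginal_iff.mpr (congrArg (sumOut j) hρk.symm)) sj' hne_sj).le
  exact h1 ρ hρ hj τ hτ (sameMarginal_iff.mpr hρij) si' hne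

/-- The player-compatibility relation is transitive. -/
theorem compatibility_trans
    (U : ∀ _i : ι, (∀ j, S j) → ℝ)
    (hcard : ∀ i, 2 ≤ Fintype.card (S i))
    (i j k : ι) (hij : i ≠ j) (hjk : j ≠ k) (hik : i ≠ k)
    (si : S i) (sj : S j) (sk : S k)
    (h1 : MoreCompatible U i j si sj) (h2 : MoreCompatible U j k sj sk) :
    MoreCompatible U i k si sk :=
  compatibility_trans_general U i j k si sj sk h1 h2
end
end

section
/- In a game factorable for player i, if an information set h* of another player j belongs to F_i[s_i] for some strategy s_i of i, and j has at least two actions at h*, then h* is on the path of play whenever i plays s_i, regardless of the other players' strategy profile. -/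
/-
If `h*` were off the path of play under `(s_i, s_{-i})`, switching `j`'s action at `h*` would
leave every payoff unchanged.  But `h* ∈ F_i[s_i]` means that, against `s_i`, player `i`'s
payoff separates any two opponents' profiles that differ at `h*`, and `j` has a second action
there to switch to.
-/

open scoped Classical

noncomputable section

variable {ι H : Type} [Fintype ι] [DecidableEq ι] [Fintype H] [DecidableEq H]

/-- Combine a strategy of player `i` (actions at `i`'s information sets) with a profile
of the opponents' actions into a full action profile. -/
def combine (owner : H → ι) (A : H → Type) (i : ι)
    (si : ∀ h : {h // owner h = i}, A h) (so : ∀ h : {h // owner h ≠ i}, A h) :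
    ∀ h, A h :=
  fun h => if hh : owner h = i then si ⟨h, hh⟩ else so ⟨h, hh⟩

/-- Player `i`'s payoff is independent of the information set `hstar`. -/
def PayoffIndep {A : H → Type} (payoff : ι → (∀ h, A h) → ℝ) (i : ι) (hstar : H) : Prop :=
  ∀ (a : ∀ h, A h) (x x' : A hstar),
    payoff i (Function.update a hstar x) = payoff i (Function.update a hstar x')

omit [Fintype ι] [DecidableEq ι] [Fintype H] in
theorem onPath_of_payoff_update_ne {A : H → Type} {onPath : (∀ h, A h) → H → Prop}
    {payoff : ι → (∀ h, A h) → ℝ}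
    (hoffPay : ∀ (a : ∀ h, A h) (h : H) (x : A h), ¬ onPath a h →
      ∀ i', payoff i' (Function.update a h x) = payoff i' a)
    {a : ∀ h, A h} {h : H} {x : A h} {i' : ι}
    (hpay : payoff i' (Function.update a h x) ≠ payoff i' a) : onPath a h :=
  by_contra fun hoff => hpay (hoffPay a h x hoff i')

section

variable {owner : H → ι} {A : H → Type} {i : ι}

omit [Fintype ι] [Fintype H] in
theorem combine_update_opponent (si : ∀ h : {h // owner h = i}, A h)
    (so : ∀ h : {h // owner h ≠ i}, A h) {h : H} (hne : owner h ≠ i) (x : A h) :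
    combine owner A i si (Function.update so ⟨h, hne⟩ x) =
      Function.update (combine owner A i si so) h x := by
  funext h'
  by_cases hh : h' = h
  · subst hh
    simp [combine, hne]
  · simp [combine, Function.update, hh]

omit [Fintype ι] [Fintype H] in
theorem payoff_combine_update_ne {payoff : ι → (∀ h, A h) → ℝ}
    {si : ∀ h : {h // owner h = i}, A h} {F : Finset H}
    (hFsep : ∀ so so' : ∀ h : {h // owner h ≠ i}, A h,
      payoff i (combine owner A i si so) = payoff i (combine owner A i si so') →
        ∀ (h : H), h ∈ F → ∀ (hne : owner h ≠ i), so ⟨h, hne⟩ = so' ⟨h, hne⟩)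
    {h : H} (hmem : h ∈ F) (hne : owner h ≠ i)
    (so : ∀ h : {h // owner h ≠ i}, A h) {x : A h} (hx : x ≠ so ⟨h, hne⟩) :
    payoff i (combine owner A i si (Function.update so ⟨h, hne⟩ x)) ≠
      payoff i (combine owner A i si so) := fun hpay =>
  hx (by simpa using hFsep _ so hpay h hmem hne)

end

theorem relevant_set_always_on_path_general
    (owner : H → ι) (A : H → Type) [∀ h, Fintype (A h)]
    (onPath : (∀ h, A h) → H → Prop) (payoff : ι → (∀ h, A h) → ℝ)
    -- changing the action at an off-path information set changes neither payoffs nor the path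
    (hoffPay : ∀ (a : ∀ h, A h) (h : H) (x : A h), ¬ onPath a h →
      ∀ i', payoff i' (Function.update a h x) = payoff i' a)
    (i : ι)
    -- the game is factorable for i, with s_i-relevant information sets F s_i
    (F : (∀ h : {h // owner h = i}, A h) → Finset H)
    (hFmeas : ∀ si (so so' : ∀ h : {h // owner h ≠ i}, A h),
      payoff i (combine owner A i si so) = payoff i (combine owner A i si so') ↔
        ∀ (h : H), h ∈ F si → ∀ (hne : owner h ≠ i), so ⟨h, hne⟩ = so' ⟨h, hne⟩)
    -- h* is an information set of another player j with at least two actions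
    (hstar : H) (j : ι) (hji : j ≠ i) (hownj : owner hstar = j)
    (hcard : 2 ≤ Fintype.card (A hstar))
    (si : ∀ h : {h // owner h = i}, A h) (hmem : hstar ∈ F si) :
    ∀ so : ∀ h : {h // owner h ≠ i}, A h, onPath (combine owner A i si so) hstar := by
  intro so
  have hne : owner hstar ≠ i := hownj ▸ hji
  obtain ⟨x, hx⟩ := Fintype.exists_ne_of_one_lt_card hcard (so ⟨hstar, hne⟩)
  refine onPath_of_payoff_update_ne hoffPay (x := x) (i' := i) ?_
  rw [← combine_update_opponent si so hne x]
  exact payoff_combine_update_ne (fun so so' => (hFmeas si so so').mp) hmem hne so hx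

/-- Lemma: in a game factorable for `i`, if `h*` is an information set of another
player `j` with at least two actions and `h* ∈ F_i[s_i]`, then `h*` is on the path of
play whenever `i` plays `s_i`, for any profile of the others' play. -/
theorem relevant_set_always_on_path
    (owner : H → ι) (A : H → Type) [∀ h, Fintype (A h)] [∀ h, Nonempty (A h)]
    (onPath : (∀ h, A h) → H → Prop) (payoff : ι → (∀ h, A h) → ℝ)
    -- changing the action at an off-path information set changes neither payoffs nor the path
    (hoffPay : ∀ (a : ∀ h, A h) (h : H) (x : A h), ¬ onPath a h →
      ∀ i', payoff i' (Function.update a h x) = payoff i' a)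
    (hoffPath : ∀ (a : ∀ h, A h) (h : H) (x : A h), ¬ onPath a h →
      ∀ h', onPath (Function.update a h x) h' ↔ onPath a h')
    -- each player moves at most once along any path of play
    (honce : ∀ (a : ∀ h, A h) (h h' : H), onPath a h → onPath a h' →
      owner h = owner h' → h = h')
    (i : ι)
    -- the game is factorable for i, with s_i-relevant information sets F s_i
    (F : (∀ h : {h // owner h = i}, A h) → Finset H)
    (hFowner : ∀ si h, h ∈ F si → owner h ≠ i)
    (hFmeas : ∀ si (so so' : ∀ h : {h // owner h ≠ i}, A h),
      payoff i (combine owner A i si so) = payoff i (combine owner A i si so') ↔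
        ∀ (h : H), h ∈ F si → ∀ (hne : owner h ≠ i), so ⟨h, hne⟩ = so' ⟨h, hne⟩)
    (hFdisj : ∀ si si', si ≠ si' → Disjoint (F si) (F si'))
    -- h* is an information set of another player j with at least two actions
    (hstar : H) (j : ι) (hji : j ≠ i) (hownj : owner hstar = j)
    (hcard : 2 ≤ Fintype.card (A hstar))
    (si : ∀ h : {h // owner h = i}, A h) (hmem : hstar ∈ F si) :
    ∀ so : ∀ h : {h // owner h ≠ i}, A h, onPath (combine owner A i si so) hstar :=
  relevant_set_always_on_path_general owner A onPath payoff hoffPay i F hFmeas hstar j hji hownj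
    hcard si hmem

end
end

section
/- In a game factorable for player i, if i's payoff is not independent of the information set h* of player j ≠ i, then (i) j has at least two actions at h*, and (ii) there exists a strategy s_i of i with h* ∈ F_i[s_i]. -/
open scoped Classical

noncomputable section

variable {ι H : Type} [Fintype ι] [DecidableEq ι] [Fintype H] [DecidableEq H]

/-! A profile at which `i`'s payoff changes with the action at `h*` fixes a strategy `s_i` of `i`
(its restriction to `i`'s own information sets, which `h*` is not among). Factorability says that
`i`'s payoff against `s_i` sees exactly the opponents' actions on `F_i[s_i]`; the two profiles
differ only at `h*`, so `h* ∈ F_i[s_i]`, and the two actions at `h*` are distinct. -/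

omit [Fintype ι] [Fintype H] [DecidableEq H] in
theorem combine_restrict (owner : H → ι) (A : H → Type) (i : ι) (a : ∀ h, A h) :
    combine owner A i (fun h => a h.1) (fun h => a h.1) = a := by
  funext h
  unfold combine
  split_ifs <;> rfl

omit [Fintype ι] [Fintype H] in
theorem combine_update_of_owner_ne (owner : H → ι) (A : H → Type) (i : ι) (a : ∀ h, A h)
    {hstar : H} (hne : owner hstar ≠ i) (x : A hstar) :
    combine owner A i (fun h => a h.1) (fun h => Function.update a hstar x h.1) =
      Function.update a hstar x := by
  have hown : (fun h : {h // owner h = i} => a h.1) =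
      fun h : {h // owner h = i} => Function.update a hstar x h.1 := by
    funext ⟨h, hh⟩
    exact (Function.update_of_ne (by rintro rfl; exact hne hh) x a).symm
  rw [hown, combine_restrict]

theorem payoff_dependence_implies_relevant_general
    (owner : H → ι) (A : H → Type) [∀ h, Fintype (A h)]
    (payoff : ι → (∀ h, A h) → ℝ)
    (i : ι)
    -- the game is factorable for i, with s_i-relevant information sets F s_i
    (F : (∀ h : {h // owner h = i}, A h) → Finset H)
    (hFmeas : ∀ si (so so' : ∀ h : {h // owner h ≠ i}, A h),
      payoff i (combine owner A i si so) = payoff i (combine owner A i si so') ↔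
        ∀ (h : H), h ∈ F si → ∀ (hne : owner h ≠ i), so ⟨h, hne⟩ = so' ⟨h, hne⟩)
    -- h* is an information set of a player j ≠ i, and i's payoff depends on it
    (hstar : H) (j : ι) (hji : j ≠ i) (hownj : owner hstar = j)
    (hdep : ¬ PayoffIndep payoff i hstar) :
    2 ≤ Fintype.card (A hstar) ∧
    ∃ si : ∀ h : {h // owner h = i}, A h, hstar ∈ F si := by
  obtain ⟨a, x, x', hpay⟩ : ∃ (a : ∀ h, A h) (x x' : A hstar),
      payoff i (Function.update a hstar x) ≠ payoff i (Function.update a hstar x') := by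
    simpa [PayoffIndep] using hdep
  have hxx' : x ≠ x' := by
    rintro rfl
    exact hpay rfl
  refine ⟨Fintype.one_lt_card_iff.2 ⟨x, x', hxx'⟩, fun h => a h.1, ?_⟩
  have hne : owner hstar ≠ i := hownj ▸ hji
  rw [← combine_update_of_owner_ne owner A i a hne x,
    ← combine_update_of_owner_ne owner A i a hne x'] at hpay
  by_contra hnotin
  refine hpay ((hFmeas _ _ _).2 fun h hF _ => ?_)
  have hh : h ≠ hstar := fun heq => hnotin (heq ▸ hF)
  simp only [Function.update_of_ne hh]

/-- Lemma: in a game factorable for `i`, if `i`'s payoff is not independent of the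
information set `h*` of a player `j ≠ i`, then (i) `j` has at least two actions at
`h*`, and (ii) `h* ∈ F_i[s_i]` for some strategy `s_i` of `i`. -/
theorem payoff_dependence_implies_relevant
    (owner : H → ι) (A : H → Type) [∀ h, Fintype (A h)] [∀ h, Nonempty (A h)]
    (onPath : (∀ h, A h) → H → Prop) (payoff : ι → (∀ h, A h) → ℝ)
    (hoffPay : ∀ (a : ∀ h, A h) (h : H) (x : A h), ¬ onPath a h →
      ∀ i', payoff i' (Function.update a h x) = payoff i' a)
    (hoffPath : ∀ (a : ∀ h, A h) (h : H) (x : A h), ¬ onPath a h →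
      ∀ h', onPath (Function.update a h x) h' ↔ onPath a h')
    (honce : ∀ (a : ∀ h, A h) (h h' : H), onPath a h → onPath a h' →
      owner h = owner h' → h = h')
    (i : ι)
    -- the game is factorable for i, with s_i-relevant information sets F s_i
    (F : (∀ h : {h // owner h = i}, A h) → Finset H)
    (hFowner : ∀ si h, h ∈ F si → owner h ≠ i)
    (hFmeas : ∀ si (so so' : ∀ h : {h // owner h ≠ i}, A h),
      payoff i (combine owner A i si so) = payoff i (combine owner A i si so') ↔
        ∀ (h : H), h ∈ F si → ∀ (hne : owner h ≠ i), so ⟨h, hne⟩ = so' ⟨h, hne⟩)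
    (hFdisj : ∀ si si', si ≠ si' → Disjoint (F si) (F si'))
    -- h* is an information set of a player j ≠ i, and i's payoff depends on it
    (hstar : H) (j : ι) (hji : j ≠ i) (hownj : owner hstar = j)
    (hdep : ¬ PayoffIndep payoff i hstar) :
    2 ≤ Fintype.card (A hstar) ∧
    ∃ si : ∀ h : {h // owner h = i}, A h, hstar ∈ F si :=
  payoff_dependence_implies_relevant_general owner A payoff i F hFmeas hstar j hji hownj hdep

end
end

section
/- Every binary participation game for player i is factorable for i, with F_i[In] equal to the common collection of others' information sets passed through on paths where i plays In, and F_i[Out] = ∅. -/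
/-!
Under `Out` the payoff of `i` is constant, so `F_i[Out] = ∅`. Under `In` every path visits the
same information sets; payoffs of `i` separate `In`-outcomes with different on-path actions, and
actions off the path change nothing, so two opponent profiles give `i` the same payoff exactly
when they agree at the opponents' sets on that common path, i.e. on `F_i[In]`. Disjointness is
automatic as one of the two collections is empty.
-/

open scoped Classical

noncomputable section

variable {ι H : Type} [Fintype ι] [DecidableEq ι] [Fintype H] [DecidableEq H]

section OffPath

variable {A : H → Type} {onPath : (∀ h, A h) → H → Prop} {β : Type*} {f : (∀ h, A h) → β}

omit [Fintype H] in
/-- The conclusion about paths keeps the induction going: a change at `h` is off the current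
path only because that path is still the path of `a`. -/
theorem eq_and_onPath_iff_of_eqOn_onPath_of_eqOn_compl
    (hoffPay : ∀ (a : ∀ h, A h) (h : H) (x : A h), ¬ onPath a h → f (Function.update a h x) = f a)
    (hoffPath : ∀ (a : ∀ h, A h) (h : H) (x : A h), ¬ onPath a h →
      ∀ h', onPath (Function.update a h x) h' ↔ onPath a h')
    {a b : ∀ h, A h} (s : Finset H) (hs : ∀ h ∉ s, b h = a h)
    (hab : ∀ h, onPath a h → a h = b h) :
    f b = f a ∧ ∀ h, onPath b h ↔ onPath a h := by
  induction s using Finset.induction_on generalizing b with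
  | empty =>
    obtain rfl : b = a := funext fun h => hs h (Finset.notMem_empty h)
    exact ⟨rfl, fun _ => Iff.rfl⟩
  | insert h s _ ih =>
    set b' := Function.update b h (a h)
    have hb' : f b' = f a ∧ ∀ h, onPath b' h ↔ onPath a h := by
      refine ih (fun h' hh' => ?_) (fun h' hp => ?_) <;> by_cases e : h' = h
      · subst e; simp [b']
      · simpa [b', e] using hs h' (by simp [e, hh'])
      · subst e; simp [b']
      · simpa [b', e] using hab h' hp
    by_cases hp : onPath a h
    · have : b' = b := by simp [b', hab h hp]
      rwa [← this]
    · have hb : b = Function.update b' h (b h) := by simp [b']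
      have hp' : ¬ onPath b' h := by rwa [hb'.2]
      rw [hb, hoffPay b' h (b h) hp', hb'.1]
      exact ⟨rfl, fun h' => (hoffPath b' h (b h) hp' h').trans (hb'.2 h')⟩

theorem eq_of_eqOn_onPath
    (hoffPay : ∀ (a : ∀ h, A h) (h : H) (x : A h), ¬ onPath a h → f (Function.update a h x) = f a)
    (hoffPath : ∀ (a : ∀ h, A h) (h : H) (x : A h), ¬ onPath a h →
      ∀ h', onPath (Function.update a h x) h' ↔ onPath a h')
    {a b : ∀ h, A h} (hab : ∀ h, onPath a h → a h = b h) : f a = f b :=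
  (eq_and_onPath_iff_of_eqOn_onPath_of_eqOn_compl hoffPay hoffPath Finset.univ
    (fun h hh => absurd (Finset.mem_univ h) hh) hab).1.symm

end OffPath

/-- The collection `F_i[In]` of the paper. -/
def inPathInfoSets (owner : H → ι) {A : H → Type} (onPath : (∀ h, A h) → H → Prop) (i : ι)
    {h0 : H} (aIn : A h0) : Finset H :=
  Finset.univ.filter fun h => owner h ≠ i ∧ ∀ a : ∀ h', A h', a h0 = aIn → onPath a h

omit [Fintype ι] in
theorem payoff_combine_eq_iff_of_in (owner : H → ι) {A : H → Type}
    {onPath : (∀ h, A h) → H → Prop} (u : (∀ h, A h) → ℝ)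
    (hoffPay : ∀ (a : ∀ h, A h) (h : H) (x : A h), ¬ onPath a h → u (Function.update a h x) = u a)
    (hoffPath : ∀ (a : ∀ h, A h) (h : H) (x : A h), ¬ onPath a h →
      ∀ h', onPath (Function.update a h x) h' ↔ onPath a h')
    {i : ι} {h0 : H} (hown0 : owner h0 = i) (huniq : ∀ h, owner h = i → h = h0) {aIn : A h0}
    (hsame : ∀ a a' : ∀ h, A h, a h0 = aIn → a' h0 = aIn → ∀ h, onPath a h ↔ onPath a' h)
    (hinpay : ∀ a a' : ∀ h, A h, a h0 = aIn → a' h0 = aIn →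
      u a = u a' → ∀ h, onPath a h → a h = a' h)
    {si : ∀ h : {h // owner h = i}, A h} (hsi : si ⟨h0, hown0⟩ = aIn)
    (so so' : ∀ h : {h // owner h ≠ i}, A h) :
    u (combine owner A i si so) = u (combine owner A i si so') ↔
      ∀ h ∈ inPathInfoSets owner onPath i aIn, ∀ hne : owner h ≠ i, so ⟨h, hne⟩ = so' ⟨h, hne⟩ := by
  set a := combine owner A i si so
  set a' := combine owner A i si so'
  have ha : a h0 = aIn := (dif_pos hown0).trans hsi
  have ha' : a' h0 = aIn := (dif_pos hown0).trans hsi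
  have hoff : ∀ h (hne : owner h ≠ i), a h = so ⟨h, hne⟩ ∧ a' h = so' ⟨h, hne⟩ :=
    fun h hne => ⟨dif_neg hne, dif_neg hne⟩
  simp only [inPathInfoSets, Finset.mem_filter, Finset.mem_univ, true_and, and_imp]
  constructor
  · intro heq h hne hin _
    rw [← (hoff h hne).1, ← (hoff h hne).2]
    exact hinpay a a' ha ha' heq h (hin a ha)
  · intro hagree
    refine eq_of_eqOn_onPath hoffPay hoffPath fun h hp => ?_
    by_cases hh : owner h = i
    · obtain rfl := huniq h hh
      rw [ha, ha']
    · rw [(hoff h hh).1, (hoff h hh).2]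
      exact hagree h hh (fun b hb => (hsame a b ha hb h).mp hp) hh

theorem binary_participation_factorable_general
    (owner : H → ι) (A : H → Type)
    (onPath : (∀ h, A h) → H → Prop) (payoff : ι → (∀ h, A h) → ℝ)
    -- maintained assumptions: off-path irrelevance and one move per path
    (hoffPay : ∀ (a : ∀ h, A h) (h : H) (x : A h), ¬ onPath a h →
      ∀ i', payoff i' (Function.update a h x) = payoff i' a)
    (hoffPath : ∀ (a : ∀ h, A h) (h : H) (x : A h), ¬ onPath a h →
      ∀ h', onPath (Function.update a h x) h' ↔ onPath a h')
    (i : ι)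
    -- (1) i has a unique information set h0, with exactly the two actions In and Out
    (h0 : H) (hown0 : owner h0 = i)
    (huniq : ∀ h, owner h = i → h = h0)
    (aIn aOut : A h0) (hInOut : aIn ≠ aOut)
    (htwo : ∀ x : A h0, x = aIn ∨ x = aOut)
    -- (3) all paths where i plays In pass through the same information sets
    (hsame : ∀ a a' : ∀ h, A h, a h0 = aIn → a' h0 = aIn →
      ∀ h, onPath a h ↔ onPath a' h)
    -- (4) all terminal vertices where i plays Out give i the same payoff
    (houtpay : ∀ a a' : ∀ h, A h, a h0 = aOut → a' h0 = aOut →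
      payoff i a = payoff i a')
    -- (5) terminal vertices where i plays In all have different payoffs for i
    (hinpay : ∀ a a' : ∀ h, A h, a h0 = aIn → a' h0 = aIn →
      payoff i a = payoff i a' → ∀ h, onPath a h → a h = a' h)
    -- the strategies of i playing In and Out at her unique information set
    (sIn sOut : ∀ h : {h // owner h = i}, A h)
    (hsIn : ∀ h : {h // owner h = i}, cast (congrArg A (huniq h.1 h.2)) (sIn h) = aIn)
    (hsOut : ∀ h : {h // owner h = i}, cast (congrArg A (huniq h.1 h.2)) (sOut h) = aOut) :
    ∃ F : (∀ h : {h // owner h = i}, A h) → Finset H,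
      -- factorability for i
      (∀ si h, h ∈ F si → owner h ≠ i) ∧
      (∀ si (so so' : ∀ h : {h // owner h ≠ i}, A h),
        payoff i (combine owner A i si so) = payoff i (combine owner A i si so') ↔
          ∀ (h : H), h ∈ F si → ∀ (hne : owner h ≠ i), so ⟨h, hne⟩ = so' ⟨h, hne⟩) ∧
      (∀ si si', si ≠ si' → Disjoint (F si) (F si')) ∧
      -- F[In] is the common collection of others' information sets on In-paths
      (∀ h : H, h ∈ F sIn ↔
        (owner h ≠ i ∧ ∀ a : ∀ h', A h', a h0 = aIn → onPath a h)) ∧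
      -- F[Out] is empty
      F sOut = ∅ := by
  have hIn : sIn ⟨h0, hown0⟩ = aIn := hsIn ⟨h0, hown0⟩
  have hOut : sOut ⟨h0, hown0⟩ = aOut := hsOut ⟨h0, hown0⟩
  refine ⟨fun si => if si ⟨h0, hown0⟩ = aIn then inPathInfoSets owner onPath i aIn else ∅,
    ?_, ?_, ?_, ?_, ?_⟩ <;> beta_reduce
  · intro si h hh
    split_ifs at hh
    · simp only [inPathInfoSets, Finset.mem_filter] at hh
      exact hh.2.1
    · simp at hh
  · intro si so so'
    rcases htwo (si ⟨h0, hown0⟩) with hsi | hsi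
    · rw [if_pos hsi]
      exact payoff_combine_eq_iff_of_in owner (payoff i) (fun a h x hp => hoffPay a h x hp i)
        hoffPath hown0 huniq hsame hinpay hsi so so'
    · rw [if_neg (hsi ▸ hInOut.symm)]
      simpa using houtpay _ _ ((dif_pos hown0).trans hsi) ((dif_pos hown0).trans hsi)
  · intro si si' hne
    have hext : si ⟨h0, hown0⟩ = si' ⟨h0, hown0⟩ → si = si' := fun heq => by
      funext ⟨h, hh⟩
      obtain rfl := huniq h hh
      exact heq
    split_ifs with h1 h2
    · exact absurd (hext (h1.trans h2.symm)) hne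
    · exact Finset.disjoint_empty_right _
    all_goals exact Finset.disjoint_empty_left _
  · simp [hIn, inPathInfoSets]
  · simp [hOut, hInOut.symm]

/-- Every binary participation game for `i` is factorable for `i`, with
`F_i[In]` the common collection of others' information sets passed through on paths
where `i` plays `In`, and `F_i[Out] = ∅`. -/
theorem binary_participation_factorable
    (owner : H → ι) (A : H → Type) [∀ h, Fintype (A h)] [∀ h, Nonempty (A h)]
    (onPath : (∀ h, A h) → H → Prop) (payoff : ι → (∀ h, A h) → ℝ)
    -- maintained assumptions: off-path irrelevance and one move per path
    (hoffPay : ∀ (a : ∀ h, A h) (h : H) (x : A h), ¬ onPath a h →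
      ∀ i', payoff i' (Function.update a h x) = payoff i' a)
    (hoffPath : ∀ (a : ∀ h, A h) (h : H) (x : A h), ¬ onPath a h →
      ∀ h', onPath (Function.update a h x) h' ↔ onPath a h')
    (honce : ∀ (a : ∀ h, A h) (h h' : H), onPath a h → onPath a h' →
      owner h = owner h' → h = h')
    (i : ι)
    -- (1) i has a unique information set h0, with exactly the two actions In and Out
    (h0 : H) (hown0 : owner h0 = i)
    (huniq : ∀ h, owner h = i → h = h0)
    (aIn aOut : A h0) (hInOut : aIn ≠ aOut)
    (htwo : ∀ x : A h0, x = aIn ∨ x = aOut)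
    -- (2) all paths of play pass through i's information set
    (hpass : ∀ a : ∀ h, A h, onPath a h0)
    -- (3) all paths where i plays In pass through the same information sets
    (hsame : ∀ a a' : ∀ h, A h, a h0 = aIn → a' h0 = aIn →
      ∀ h, onPath a h ↔ onPath a' h)
    -- (4) all terminal vertices where i plays Out give i the same payoff
    (houtpay : ∀ a a' : ∀ h, A h, a h0 = aOut → a' h0 = aOut →
      payoff i a = payoff i a')
    -- (5) terminal vertices where i plays In all have different payoffs for i
    (hinpay : ∀ a a' : ∀ h, A h, a h0 = aIn → a' h0 = aIn →
      payoff i a = payoff i a' → ∀ h, onPath a h → a h = a' h)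
    -- the strategies of i playing In and Out at her unique information set
    (sIn sOut : ∀ h : {h // owner h = i}, A h)
    (hsIn : ∀ h : {h // owner h = i}, cast (congrArg A (huniq h.1 h.2)) (sIn h) = aIn)
    (hsOut : ∀ h : {h // owner h = i}, cast (congrArg A (huniq h.1 h.2)) (sOut h) = aOut) :
    ∃ F : (∀ h : {h // owner h = i}, A h) → Finset H,
      -- factorability for i
      (∀ si h, h ∈ F si → owner h ≠ i) ∧
      (∀ si (so so' : ∀ h : {h // owner h ≠ i}, A h),
        payoff i (combine owner A i si so) = payoff i (combine owner A i si so') ↔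
          ∀ (h : H), h ∈ F si → ∀ (hne : owner h ≠ i), so ⟨h, hne⟩ = so' ⟨h, hne⟩) ∧
      (∀ si si', si ≠ si' → Disjoint (F si) (F si')) ∧
      -- F[In] is the common collection of others' information sets on In-paths
      (∀ h : H, h ∈ F sIn ↔
        (owner h ≠ i ∧ ∀ a : ∀ h', A h', a h0 = aIn → onPath a h)) ∧
      -- F[Out] is empty
      F sOut = ∅ :=
  binary_participation_factorable_general owner A onPath payoff hoffPay hoffPath i h0 hown0 huniq
    aIn aOut hInOut htwo hsame houtpay hinpay sIn sOut hsIn hsOut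

end
end

section
/- Induced responses from index policies respect compatibility: suppose Γ is isomorphically factorable for players i and j via bijection φ with φ(s_i*) = s_j*, and index policy r_i is more compatible with s_i* than index policy r_j is with s_j*. Then for every response path 𝔄 and every k ≥ 1, if s_j* is played for the k-th time in the deterministic history y_j(𝔄, r_j) at some finite period, then for every s_i' ≠ s_i*, the number of times s_i' is played in y_i(𝔄, r_i) before s_i* is played for the k-th time is at most the number of times φ(s_i') is played in y_j(𝔄, r_j) before s_j* is played for the k-th time. -/
open scoped Classical

noncomputable section

variable {ι H : Type} [Fintype ι] [DecidableEq ι] [Fintype H] [DecidableEq H]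

section LearnDefs

variable (A : H → Type) [∀ h, Fintype (A h)] [∀ h, DecidableEq (A h)]

/-- The observation from one play of strategy `s`: the profile of opponents' actions at
the `s`-relevant information sets `F s`. -/
abbrev ObsG {T : Type} (F : T → Finset H) (s : T) : Type := ∀ h : {h // h ∈ F s}, A h.1

/-- A finite personal history: a list of (own strategy, observation) pairs,
most recent first. -/
abbrev HistG {T : Type} (F : T → Finset H) : Type := List (Σ s : T, ObsG A F s)

/-- The subhistory of the periods in which strategy `s` was played. -/
def subH {T : Type} [DecidableEq T] (F : T → Finset H) (y : HistG A F) (s : T) :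
    List (ObsG A F s) :=
  y.filterMap fun e => if h : e.1 = s then some (h ▸ e.2) else none

/-- `r` is an index policy for the indices `idx`: after every history it plays a
strategy whose index, computed from that strategy's subhistory, is weakly highest. -/
def IsIndexPolicy {T : Type} [DecidableEq T] (F : T → Finset H)
    (idx : ∀ s : T, List (ObsG A F s) → ℝ) (r : HistG A F → T) : Prop :=
  ∀ (y : HistG A F) (s' : T), idx s' (subH A F y s') ≤ idx (r y) (subH A F y (r y))

/-- Third-party equivalence of subhistories: same length, and the same sequence of
observed actions of the players other than `i` and `j` at the common relevant
information sets. -/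
def TPE (owner : H → ι) (i j : ι) {Ti Tj : Type}
    (Fi : Ti → Finset H) (Fj : Tj → Finset H) (si : Ti) (sj : Tj)
    (li : List (ObsG A Fi si)) (lj : List (ObsG A Fj sj)) : Prop :=
  li.length = lj.length ∧
    ∀ (t : ℕ) (hti : t < li.length) (htj : t < lj.length) (h : H),
      owner h ≠ i → owner h ≠ j → ∀ (hmi : h ∈ Fi si) (hmj : h ∈ Fj sj),
        (li[t]'hti) ⟨h, hmi⟩ = (lj[t]'htj) ⟨h, hmj⟩

/-- The index policy `(idxi, ri)` is more compatible with `sistar` than `(idxj, rj)` is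
with `sjstar`: after histories with third-party equivalent subhistories for the pairs
`(sistar, sjstar)` and `(si', φ si')`, if `sjstar` has weakly the highest index for `j`
then `si' ≠ sistar` does not have weakly the highest index for `i`. -/
def PolicyMoreCompat (owner : H → ι) (i j : ι) {Ti Tj : Type}
    [DecidableEq Ti] [DecidableEq Tj]
    (Fi : Ti → Finset H) (Fj : Tj → Finset H) (φ : Ti ≃ Tj)
    (idxi : ∀ s : Ti, List (ObsG A Fi s) → ℝ)
    (idxj : ∀ s : Tj, List (ObsG A Fj s) → ℝ)
    (sistar : Ti) (sjstar : Tj) : Prop :=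
  ∀ (yi : HistG A Fi) (yj : HistG A Fj) (si' : Ti), si' ≠ sistar →
    TPE A owner i j Fi Fj sistar sjstar (subH A Fi yi sistar) (subH A Fj yj sjstar) →
    TPE A owner i j Fi Fj si' (φ si') (subH A Fi yi si') (subH A Fj yj (φ si')) →
    (∀ sj' : Tj, idxj sj' (subH A Fj yj sj') ≤ idxj sjstar (subH A Fj yj sjstar)) →
    ¬ (∀ si'' : Ti, idxi si'' (subH A Fi yi si'') ≤ idxi si' (subH A Fi yi si'))

/-- The deterministic history induced by running the learning rule `r` against the
response path `𝔄` for `t` periods: the `k`-th time `s` is played, the observation is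
the `k`-th entry of `𝔄` at the `s`-relevant information sets. -/
def playHist {T : Type} [DecidableEq T] (F : T → Finset H) (r : HistG A F → T)
    (𝔄 : ℕ → ∀ h, A h) : ℕ → HistG A F
  | 0 => []
  | t + 1 =>
      let y := playHist F r 𝔄 t
      (⟨r y, fun h => 𝔄 (subH A F y (r y)).length h.1⟩ : Σ s : T, ObsG A F s) :: y

end LearnDefs

/-! Along a fixed response path the `n`-th observation from a strategy is the `n`-th entry of
the path, whoever plays it, so the subhistories of two strategies played equally often by `i`
and `j` are automatically third-party equivalent.

Fix `m < k` and the period `σ m` at which `j` plays `sjstar` for the `m + 1`-st time. By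
induction on `i`'s periods, while `i` has played `sistar` exactly `m` times it has played each
`si' ≠ sistar` at most as often as `j` played `φ si'` before `σ m`. The count of `si'` can only
catch up when `i` plays `si'`; if the two counts were equal at that moment, `si'` would be
index-maximal for `i` while `sjstar` is index-maximal for `j` after third-party equivalent
subhistories, which compatibility forbids. Play counts only grow, which carries the invariant
from `σ m` to `σ (m + 1)` when `i` plays `sistar`, and from `σ m` to the later period `Tj`. -/

section

omit [Fintype ι] [DecidableEq ι] [Fintype H] [DecidableEq H]

section PathObs

variable (A : H → Type) {T : Type} (F : T → Finset H) (𝔄 : ℕ → ∀ h, A h)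

/-- The observations from the first `n` plays of `s`, most recent first. -/
def pathObs (s : T) (n : ℕ) : List (ObsG A F s) :=
  (List.range n).reverse.map fun m (hh : {h // h ∈ F s}) => 𝔄 m hh.1

lemma length_pathObs (s : T) (n : ℕ) : (pathObs A F 𝔄 s n).length = n := by
  simp [pathObs]

lemma pathObs_succ (s : T) (n : ℕ) :
    pathObs A F 𝔄 s (n + 1) =
      (fun hh : {h // h ∈ F s} => 𝔄 n hh.1) :: pathObs A F 𝔄 s n := by
  simp [pathObs, List.range_succ]

lemma getElem_pathObs (s : T) (n t : ℕ) (ht : t < (pathObs A F 𝔄 s n).length) :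
    (pathObs A F 𝔄 s n)[t] = fun hh : {h // h ∈ F s} => 𝔄 (n - 1 - t) hh.1 := by
  simp [pathObs]

lemma tpe_pathObs (owner : H → ι) (i j : ι) {Ti Tj : Type} (Fi : Ti → Finset H)
    (Fj : Tj → Finset H) (si : Ti) (sj : Tj) (n : ℕ) :
    TPE A owner i j Fi Fj si sj (pathObs A Fi 𝔄 si n) (pathObs A Fj 𝔄 sj n) := by
  refine ⟨by simp only [length_pathObs], fun t hti htj h _ _ hmi hmj => ?_⟩
  rw [getElem_pathObs, getElem_pathObs]

end PathObs

section Coupling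

variable (A : H → Type)
  {T : Type} [DecidableEq T] (F : T → Finset H) (r : HistG A F → T) (𝔄 : ℕ → ∀ h, A h)

def playCount (t : ℕ) (s : T) : ℕ := (subH A F (playHist A F r 𝔄 t) s).length

lemma subH_playHist_succ (t : ℕ) (s : T) :
    subH A F (playHist A F r 𝔄 (t + 1)) s =
      if r (playHist A F r 𝔄 t) = s then
        (fun hh : {h // h ∈ F s} => 𝔄 (playCount A F r 𝔄 t s) hh.1) ::
          subH A F (playHist A F r 𝔄 t) s
      else subH A F (playHist A F r 𝔄 t) s := by
  by_cases hrs : r (playHist A F r 𝔄 t) = s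
  · subst hrs
    simp [subH, playHist, playCount]
  · simp [subH, playHist, hrs]

lemma playCount_zero (s : T) : playCount A F r 𝔄 0 s = 0 := rfl

lemma playCount_succ (t : ℕ) (s : T) :
    playCount A F r 𝔄 (t + 1) s =
      playCount A F r 𝔄 t s + if r (playHist A F r 𝔄 t) = s then 1 else 0 := by
  unfold playCount
  rw [subH_playHist_succ]
  split_ifs <;> simp [playCount]

lemma monotone_playCount (s : T) : Monotone fun t => playCount A F r 𝔄 t s :=
  monotone_nat_of_le_succ fun t => by rw [playCount_succ]; omega

lemma subH_playHist_eq_pathObs (t : ℕ) (s : T) :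
    subH A F (playHist A F r 𝔄 t) s = pathObs A F 𝔄 s (playCount A F r 𝔄 t s) := by
  induction t with
  | zero => rfl
  | succ t ih =>
    rw [subH_playHist_succ, playCount_succ]
    split_ifs
    · rw [ih, pathObs_succ]
    · rw [ih, Nat.add_zero]

lemma exists_playHist_eq_of_lt_playCount {s : T} {t m : ℕ} (hm : m < playCount A F r 𝔄 t s) :
    ∃ t' < t, playCount A F r 𝔄 t' s = m ∧ r (playHist A F r 𝔄 t') = s := by
  induction t with
  | zero => exact absurd hm (by simp [playCount_zero])
  | succ t ih =>
    rw [playCount_succ] at hm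
    by_cases hlt : m < playCount A F r 𝔄 t s
    · obtain ⟨t', ht', hcount⟩ := ih hlt
      exact ⟨t', by omega, hcount⟩
    · split_ifs at hm with hplay
      · exact ⟨t, by omega, by omega, hplay⟩
      · omega

end Coupling

section TwoPlayers

variable (A : H → Type)
  (owner : H → ι) (i j : ι) {Ti Tj : Type} [DecidableEq Ti] [DecidableEq Tj]
  (Fi : Ti → Finset H) (Fj : Tj → Finset H) (𝔄 : ℕ → ∀ h, A h)

lemma tpe_subH_playHist (ri : HistG A Fi → Ti) (rj : HistG A Fj → Tj) {si : Ti} {sj : Tj}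
    {ti tj : ℕ} (hcount : playCount A Fi ri 𝔄 ti si = playCount A Fj rj 𝔄 tj sj) :
    TPE A owner i j Fi Fj si sj (subH A Fi (playHist A Fi ri 𝔄 ti) si)
      (subH A Fj (playHist A Fj rj 𝔄 tj) sj) := by
  rw [subH_playHist_eq_pathObs, subH_playHist_eq_pathObs, hcount]
  exact tpe_pathObs A 𝔄 owner i j Fi Fj si sj _

variable {A owner i j Fi Fj} {φ : Ti ≃ Tj}
  {idxi : ∀ s, List (ObsG A Fi s) → ℝ} {ri : HistG A Fi → Ti}
  {idxj : ∀ s, List (ObsG A Fj s) → ℝ} {rj : HistG A Fj → Tj}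
  {sistar : Ti} {sjstar : Tj}

lemma PolicyMoreCompat.playHist_ne (hri : IsIndexPolicy A Fi idxi ri)
    (hrj : IsIndexPolicy A Fj idxj rj)
    (hcompat : PolicyMoreCompat A owner i j Fi Fj φ idxi idxj sistar sjstar)
    {ti tj : ℕ} (hj : rj (playHist A Fj rj 𝔄 tj) = sjstar)
    (hstar : playCount A Fi ri 𝔄 ti sistar = playCount A Fj rj 𝔄 tj sjstar)
    {si' : Ti} (hne : si' ≠ sistar)
    (hcount : playCount A Fi ri 𝔄 ti si' = playCount A Fj rj 𝔄 tj (φ si')) :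
    ri (playHist A Fi ri 𝔄 ti) ≠ si' := by
  intro hi
  refine hcompat _ _ si' hne (tpe_subH_playHist A owner i j Fi Fj 𝔄 ri rj hstar)
    (tpe_subH_playHist A owner i j Fi Fj 𝔄 ri rj hcount) (fun sj' => ?_) (fun si'' => ?_)
  · rw [← hj]; exact hrj _ sj'
  · rw [← hi]; exact hri _ si''

lemma PolicyMoreCompat.playCount_le (hri : IsIndexPolicy A Fi idxi ri)
    (hrj : IsIndexPolicy A Fj idxj rj)
    (hcompat : PolicyMoreCompat A owner i j Fi Fj φ idxi idxj sistar sjstar)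
    {si' : Ti} (hne : si' ≠ sistar) (ti : ℕ) {tj : ℕ}
    (hj : rj (playHist A Fj rj 𝔄 tj) = sjstar)
    (hstar : playCount A Fi ri 𝔄 ti sistar = playCount A Fj rj 𝔄 tj sjstar) :
    playCount A Fi ri 𝔄 ti si' ≤ playCount A Fj rj 𝔄 tj (φ si') := by
  induction ti generalizing tj with
  | zero => exact (playCount_zero A Fi ri 𝔄 si').trans_le (Nat.zero_le _)
  | succ t ih =>
    rw [playCount_succ] at hstar ⊢
    by_cases hplay : ri (playHist A Fi ri 𝔄 t) = sistar
    · rw [if_pos hplay] at hstar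
      rw [if_neg (hplay ▸ hne.symm), Nat.add_zero]
      obtain ⟨tj', htj', hcount', hj'⟩ := exists_playHist_eq_of_lt_playCount A Fj rj 𝔄
        (s := sjstar) (m := playCount A Fi ri 𝔄 t sistar) (t := tj) (by omega)
      exact (ih hj' hcount'.symm).trans (monotone_playCount A Fj rj 𝔄 _ htj'.le)
    · rw [if_neg hplay, Nat.add_zero] at hstar
      have hle := ih hj hstar
      split_ifs with hplay'
      · have hlt := lt_of_le_of_ne hle fun heq =>
          hcompat.playHist_ne 𝔄 hri hrj hj hstar hne heq hplay'
        omega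
      · omega

end TwoPlayers

end

theorem coupled_experimentation_counts_general
    (owner : H → ι) (A : H → Type) [∀ h, Fintype (A h)] [∀ h, DecidableEq (A h)]
    (i j : ι)
    (Fi : (∀ h : {h // owner h = i}, A h) → Finset H)
    (Fj : (∀ h : {h // owner h = j}, A h) → Finset H)
    (φ : (∀ h : {h // owner h = i}, A h) ≃ (∀ h : {h // owner h = j}, A h))
    (sistar : ∀ h : {h // owner h = i}, A h) (sjstar : ∀ h : {h // owner h = j}, A h)
    -- index policies for i and j
    (idxi : ∀ s, List (ObsG A Fi s) → ℝ) (ri : HistG A Fi → _)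
    (hri : IsIndexPolicy A Fi idxi ri)
    (idxj : ∀ s, List (ObsG A Fj s) → ℝ) (rj : HistG A Fj → _)
    (hrj : IsIndexPolicy A Fj idxj rj)
    (hcompat : PolicyMoreCompat A owner i j Fi Fj φ idxi idxj sistar sjstar)
    -- a response path, and the count k
    (𝔄 : ℕ → ∀ h, A h) (k : ℕ) :
    ∀ Tj : ℕ, (subH A Fj (playHist A Fj rj 𝔄 Tj) sjstar).length = k →
      (∀ t < Tj, (subH A Fj (playHist A Fj rj 𝔄 t) sjstar).length < k) →
      ∀ Ti : ℕ, (subH A Fi (playHist A Fi ri 𝔄 Ti) sistar).length < k →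
        ∀ si', si' ≠ sistar →
          (subH A Fi (playHist A Fi ri 𝔄 Ti) si').length ≤
            (subH A Fj (playHist A Fj rj 𝔄 Tj) (φ si')).length := by
  intro Tj hTj _ Ti hTi si' hne
  obtain ⟨tj, htj, hstar, hj⟩ :=
    exists_playHist_eq_of_lt_playCount A Fj rj 𝔄 (s := sjstar)
      (m := playCount A Fi ri 𝔄 Ti sistar) (t := Tj) (hTi.trans_eq hTj.symm)
  exact (hcompat.playCount_le 𝔄 hri hrj hne Ti hj hstar.symm).trans
    (monotone_playCount A Fj rj 𝔄 _ htj.le)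

/-- Proposition (coupling step): if `Γ` is isomorphically factorable for `i` and `j`
via `φ` with `φ s_i* = s_j*` and the index policy `r_i` is more compatible with `s_i*`
than `r_j` is with `s_j*`, then along any response path `𝔄`, whenever `s_j*` is played
for the `k`-th time at a finite period, the number of plays of any `s_i' ≠ s_i*` before
`i`'s `k`-th play of `s_i*` is at most the number of plays of `φ s_i'` before `j`'s
`k`-th play of `s_j*`. -/
theorem coupled_experimentation_counts
    (owner : H → ι) (A : H → Type) [∀ h, Fintype (A h)] [∀ h, DecidableEq (A h)]
    (payoff : ι → (∀ h, A h) → ℝ)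
    (i j : ι) (hij : i ≠ j)
    (Fi : (∀ h : {h // owner h = i}, A h) → Finset H)
    (Fj : (∀ h : {h // owner h = j}, A h) → Finset H)
    -- the game is factorable for i
    (hFiOwner : ∀ si h, h ∈ Fi si → owner h ≠ i)
    (hFiMeas : ∀ si (so so' : ∀ h : {h // owner h ≠ i}, A h),
      payoff i (combine owner A i si so) = payoff i (combine owner A i si so') ↔
        ∀ (h : H), h ∈ Fi si → ∀ (hne : owner h ≠ i), so ⟨h, hne⟩ = so' ⟨h, hne⟩)
    (hFiDisj : ∀ si si', si ≠ si' → Disjoint (Fi si) (Fi si'))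
    -- the game is factorable for j
    (hFjOwner : ∀ sj h, h ∈ Fj sj → owner h ≠ j)
    (hFjMeas : ∀ sj (so so' : ∀ h : {h // owner h ≠ j}, A h),
      payoff j (combine owner A j sj so) = payoff j (combine owner A j sj so') ↔
        ∀ (h : H), h ∈ Fj sj → ∀ (hne : owner h ≠ j), so ⟨h, hne⟩ = so' ⟨h, hne⟩)
    (hFjDisj : ∀ sj sj', sj ≠ sj' → Disjoint (Fj sj) (Fj sj'))
    -- isomorphic factoring via φ
    (φ : (∀ h : {h // owner h = i}, A h) ≃ (∀ h : {h // owner h = j}, A h))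
    (hiso : ∀ si (h : H), owner h ≠ i → owner h ≠ j → (h ∈ Fi si ↔ h ∈ Fj (φ si)))
    (sistar : ∀ h : {h // owner h = i}, A h) (sjstar : ∀ h : {h // owner h = j}, A h)
    (hφstar : φ sistar = sjstar)
    -- index policies for i and j
    (idxi : ∀ s, List (ObsG A Fi s) → ℝ) (ri : HistG A Fi → _)
    (hri : IsIndexPolicy A Fi idxi ri)
    (idxj : ∀ s, List (ObsG A Fj s) → ℝ) (rj : HistG A Fj → _)
    (hrj : IsIndexPolicy A Fj idxj rj)
    (hcompat : PolicyMoreCompat A owner i j Fi Fj φ idxi idxj sistar sjstar)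
    -- a response path, and the count k
    (𝔄 : ℕ → ∀ h, A h) (k : ℕ) (hk : 1 ≤ k)
    -- s_j* is played for the k-th time at some finite period
    (hfin : ∃ T, (subH A Fj (playHist A Fj rj 𝔄 T) sjstar).length = k) :
    ∀ Tj : ℕ, (subH A Fj (playHist A Fj rj 𝔄 Tj) sjstar).length = k →
      (∀ t < Tj, (subH A Fj (playHist A Fj rj 𝔄 t) sjstar).length < k) →
      ∀ Ti : ℕ, (subH A Fi (playHist A Fi ri 𝔄 Ti) sistar).length < k →
        ∀ si', si' ≠ sistar →
          (subH A Fi (playHist A Fi ri 𝔄 Ti) si').length ≤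
            (subH A Fj (playHist A Fj rj 𝔄 Tj) (φ si')).length :=
  coupled_experimentation_counts_general owner A i j Fi Fj φ sistar sjstar idxi ri hri idxj rj hrj
    hcompat 𝔄 k

end
end

section
/- The value of the auxiliary stopping problem defining the Gittins index of strategy s_i under any stopping rule τ equals the expected stage-game payoff of playing s_i against the synthetic correlated profile: V(τ; s_i, ν_{s_i}) = U_i(s_i, α(ν_{s_i}, τ)), and the synthetic correlated profile α(ν_{s_i}, τ) is totally mixed whenever the belief ν_{s_i} has full support. -/
open scoped Classical
open MeasureTheory

noncomputable section

variable {ι H : Type} [Fintype ι] [DecidableEq ι] [Fintype H] [DecidableEq H]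

section GittinsDefs

variable (A : H → Type) [∀ h, Fintype (A h)] [∀ h, DecidableEq (A h)] [∀ h, Nonempty (A h)]

/-- A profile of actions at the information sets in `Fs`. -/
abbrev ProfOn (Fs : Finset H) : Type := ∀ h : {h // h ∈ Fs}, A h.1

/-- The probability, in the auxiliary stopping problem with belief `ν` (an independent
belief over the mixed actions at each information set in `Fs`, with the realized mixed
profile drawn once and observations i.i.d. thereafter) and stopping rule `τ`, that the
stopping time is at least `t+1` and the period-`(t+1)` observation equals `prof`. -/
def pProb {Fs : Finset H}
    (ν : ∀ h : {h // h ∈ Fs}, Measure (A h.1 → ℝ)) [∀ h, SigmaFinite (ν h)]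
    (τ : List (ProfOn A Fs) → Bool) (t : ℕ) (prof : ProfOn A Fs) : ℝ :=
  ∫ α, (∑ pre : Fin t → ProfOn A Fs,
    if ∀ u, 1 ≤ u → u ≤ t → τ ((List.ofFn pre).take u) = false then
      (∏ u, ∏ h, α h (pre u h)) * ∏ h, α h (prof h)
    else 0) ∂(Measure.pi ν)

/-- The probability that the stopping time is at least `t+1`. -/
def surv {Fs : Finset H}
    (ν : ∀ h : {h // h ∈ Fs}, Measure (A h.1 → ℝ)) [∀ h, SigmaFinite (ν h)]
    (τ : List (ProfOn A Fs) → Bool) (t : ℕ) : ℝ :=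
  ∑ prof : ProfOn A Fs, pProb A ν τ t prof

/-- The synthetic correlated profile `α(ν, τ)` induced by belief `ν` and stopping
rule `τ` at effective discount factor `β`. -/
def synth {Fs : Finset H} (β : ℝ)
    (ν : ∀ h : {h // h ∈ Fs}, Measure (A h.1 → ℝ)) [∀ h, SigmaFinite (ν h)]
    (τ : List (ProfOn A Fs) → Bool) (prof : ProfOn A Fs) : ℝ :=
  (∑' t : ℕ, β ^ t * pProb A ν τ t prof) / (∑' t : ℕ, β ^ t * surv A ν τ t)

/-- The normalized discounted value of the auxiliary stopping problem under the
stopping rule `τ`, where `Up prof` is the stage payoff when `prof` is observed. -/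
def Vval {Fs : Finset H} (β : ℝ)
    (ν : ∀ h : {h // h ∈ Fs}, Measure (A h.1 → ℝ)) [∀ h, SigmaFinite (ν h)]
    (τ : List (ProfOn A Fs) → Bool) (Up : ProfOn A Fs → ℝ) : ℝ :=
  (∑' t : ℕ, β ^ t * ∑ prof : ProfOn A Fs, pProb A ν τ t prof * Up prof) /
    (∑' t : ℕ, β ^ t * surv A ν τ t)

/-- Player `i`'s stage-game payoff from playing `si` when the opponents' actions at the
`si`-relevant information sets `Fsi` are given by `prof` (by factorability, the payoff
does not depend on the actions elsewhere). -/
def UpayOf (owner : H → ι) (payoff : ι → (∀ h, A h) → ℝ) (i : ι)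
    (Fsi : Finset H) (si : ∀ h : {h // owner h = i}, A h) (prof : ProfOn A Fsi) : ℝ :=
  payoff i fun h =>
    if hh : owner h = i then si ⟨h, hh⟩
    else if hm : h ∈ Fsi then prof ⟨h, hm⟩ else Classical.arbitrary (A h)

/-- A measure on the space of mixed actions has full support on the simplex. -/
def FullSupportMeas {X : Type} [Fintype X] (μ : Measure (X → ℝ)) : Prop :=
  ∀ u : Set (X → ℝ), IsOpen u →
    (u ∩ {α : X → ℝ | (∀ a, 0 ≤ α a) ∧ ∑ a, α a = 1}).Nonempty → 0 < μ u

end GittinsDefs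

/-!
The discounted weights `β ^ t p_{t,k}` are dominated by the geometric series, so the finite sum
over observed profiles commutes with the series in the numerator of `V`; dividing by the common
denominator turns `V` into the `U_i(s_i, ·)`-average against `α(ν, τ)`. For total mixedness it
suffices to look at the first period, where no stopping decision has been made yet: there
`p_{1,k} = ∏_h ∫ x(a^(k)_h) dν_h`, and each factor is positive because a full-support belief
charges the open set of mixed actions putting positive weight on `a^(k)_h`.
-/

open MeasureTheory Finset

theorem prod_apply_mem_stdSimplex {J : Type*} {X : J → Type*} [Fintype J] [DecidableEq J]
    [∀ j, Fintype (X j)] {α : ∀ j, X j → ℝ} (hα : ∀ j, α j ∈ stdSimplex ℝ (X j)) :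
    (fun x : ∀ j, X j => ∏ j, α j (x j)) ∈ stdSimplex ℝ (∀ j, X j) := by
  refine ⟨fun x => prod_nonneg fun j _ => (hα j).1 (x j), ?_⟩
  rw [← Fintype.prod_sum]
  simp [(hα _).2]

theorem sum_ite_mul_mem_unitInterval {Y : Type*} [Fintype Y] {w : Y → ℝ}
    (hw : w ∈ stdSimplex ℝ Y) (S : Y → Prop) {c : ℝ} (hc : c ∈ unitInterval) :
    (∑ y, if S y then w y * c else 0) ∈ unitInterval := by
  simp_rw [← ite_zero_mul, ← sum_mul]
  refine unitInterval.mul_mem ⟨sum_nonneg fun y _ => ?_, ?_⟩ hc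
  · split_ifs
    exacts [hw.1 y, le_rfl]
  · calc _ ≤ ∑ y, w y := sum_le_sum fun y _ => by split_ifs; exacts [le_rfl, hw.1 y]
      _ = 1 := hw.2

theorem integral_mem_unitInterval {Ω : Type*} [MeasurableSpace Ω] {μ : Measure Ω}
    [IsProbabilityMeasure μ] {f : Ω → ℝ} (hf : ∀ᵐ ω ∂μ, f ω ∈ unitInterval) :
    ∫ ω, f ω ∂μ ∈ unitInterval := by
  have hf0 : 0 ≤ᵐ[μ] f := hf.mono fun _ h => h.1
  refine ⟨integral_nonneg_of_ae hf0, ?_⟩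
  calc ∫ ω, f ω ∂μ ≤ ∫ _, (1 : ℝ) ∂μ :=
        integral_mono_of_nonneg hf0 (integrable_const 1) (hf.mono fun _ h => h.2)
    _ = 1 := by simp

theorem integral_apply_pos_of_fullSupportMeas {X : Type} [Fintype X]
    {μ : Measure (X → ℝ)} [IsFiniteMeasure μ] (hμ : ∀ᵐ x ∂μ, x ∈ stdSimplex ℝ X)
    (hfull : FullSupportMeas μ) (a : X) : 0 < ∫ x, x a ∂μ := by
  have hnonneg : 0 ≤ᵐ[μ] fun x => x a := hμ.mono fun x hx => hx.1 a
  have hint : Integrable (fun x : X → ℝ => x a) μ :=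
    Integrable.of_bound (continuous_apply a).aestronglyMeasurable 1 <| hμ.mono fun x hx => by
      rw [Real.norm_of_nonneg (hx.1 a)]
      exact (mem_Icc_of_mem_stdSimplex hx a).2
  have hpos : 0 < μ {x | 0 < x a} :=
    hfull _ (isOpen_lt continuous_const (continuous_apply a))
      ⟨Pi.single a 1, by simp, single_mem_stdSimplex ℝ a⟩
  rw [integral_pos_iff_support_of_nonneg_ae hnonneg hint]
  exact hpos.trans_le (measure_mono fun x hx => hx.ne')

theorem summable_pow_mul_of_bounded {β C : ℝ} {f : ℕ → ℝ} (hβ0 : 0 ≤ β) (hβ1 : β < 1)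
    (hf0 : ∀ t, 0 ≤ f t) (hfC : ∀ t, f t ≤ C) : Summable fun t => β ^ t * f t :=
  ((summable_geometric_of_lt_one hβ0 hβ1).mul_right C).of_nonneg_of_le
    (fun t => mul_nonneg (pow_nonneg hβ0 t) (hf0 t))
    fun t => mul_le_mul_of_nonneg_left (hfC t) (pow_nonneg hβ0 t)

theorem tsum_pow_mul_pos {β : ℝ} {f : ℕ → ℝ} (hβ0 : 0 ≤ β)
    (hsum : Summable fun t => β ^ t * f t) (hf0 : ∀ t, 0 ≤ f t) (h0 : 0 < f 0) :
    0 < ∑' t, β ^ t * f t :=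
  hsum.tsum_pos (fun t => mul_nonneg (pow_nonneg hβ0 t) (hf0 t)) 0 (by simpa using h0)

section StoppingProblem

variable {A : H → Type} [∀ h, Fintype (A h)] {Fs : Finset H}
  {ν : ∀ h : {h // h ∈ Fs}, Measure (A h.1 → ℝ)} [∀ h, IsProbabilityMeasure (ν h)]
  (τ : List (ProfOn A Fs) → Bool) {β : ℝ}

omit [Fintype H]

theorem pProb_zero (prof : ProfOn A Fs) :
    pProb A ν τ 0 prof = ∏ h, ∫ x, x (prof h) ∂(ν h) := calc
  _ = ∫ α, ∏ h, α h (prof h) ∂(Measure.pi ν) := by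
    rw [pProb]
    congr 1
    funext α
    simp only [univ_unique, sum_singleton]
    -- no stopping decision precedes the first observation
    rw [if_pos (by omega)]
    simp
  _ = _ := integral_fintype_prod_eq_prod fun h (x : A h.1 → ℝ) => x (prof h)

variable (hν : ∀ h : {h // h ∈ Fs}, ∀ᵐ x ∂(ν h), x ∈ stdSimplex ℝ (A h.1))
include hν

theorem pProb_mem_unitInterval (t : ℕ) (prof : ProfOn A Fs) :
    pProb A ν τ t prof ∈ unitInterval := by
  refine integral_mem_unitInterval ?_
  filter_upwards [Filter.eventually_all.2 fun h => Measure.tendsto_eval_ae_ae.eventually (hν h)]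
    with α hα
  exact sum_ite_mul_mem_unitInterval
    (prod_apply_mem_stdSimplex fun _ : Fin t => prod_apply_mem_stdSimplex hα) _
    (mem_Icc_of_mem_stdSimplex (prod_apply_mem_stdSimplex hα) prof)

theorem pProb_zero_pos (hfull : ∀ h, FullSupportMeas (ν h)) (prof : ProfOn A Fs) :
    0 < pProb A ν τ 0 prof := by
  rw [pProb_zero]
  exact prod_pos fun h _ => integral_apply_pos_of_fullSupportMeas (hν h) (hfull h) (prof h)

variable (hβ0 : 0 ≤ β) (hβ1 : β < 1)
include hβ0 hβ1

theorem summable_pow_mul_pProb (prof : ProfOn A Fs) :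
    Summable fun t => β ^ t * pProb A ν τ t prof :=
  summable_pow_mul_of_bounded hβ0 hβ1 (fun t => (pProb_mem_unitInterval τ hν t prof).1)
    fun t => (pProb_mem_unitInterval τ hν t prof).2

theorem Vval_eq_sum_synth_mul (Up : ProfOn A Fs → ℝ) :
    Vval A β ν τ Up = ∑ prof, synth A β ν τ prof * Up prof := by
  have hnum : ∑' t, β ^ t * ∑ prof, pProb A ν τ t prof * Up prof =
      ∑ prof, (∑' t, β ^ t * pProb A ν τ t prof) * Up prof := by
    simp_rw [mul_sum, ← mul_assoc, ← tsum_mul_right]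
    exact Summable.tsum_finsetSum fun prof _ =>
      (summable_pow_mul_pProb τ hν hβ0 hβ1 prof).mul_right _
  rw [Vval, hnum, sum_div]
  simp_rw [synth, div_mul_eq_mul_div]

theorem synth_pos [∀ h, Nonempty (A h)] (hfull : ∀ h, FullSupportMeas (ν h))
    (prof : ProfOn A Fs) : 0 < synth A β ν τ prof := by
  have hsurv : Summable fun t => β ^ t * surv A ν τ t := by
    simp_rw [surv, mul_sum]
    exact summable_sum fun prof _ => summable_pow_mul_pProb τ hν hβ0 hβ1 prof
  have hnum : 0 < ∑' t, β ^ t * pProb A ν τ t prof :=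
    tsum_pow_mul_pos hβ0 (summable_pow_mul_pProb τ hν hβ0 hβ1 prof)
      (fun t => (pProb_mem_unitInterval τ hν t prof).1) (pProb_zero_pos τ hν hfull prof)
  have hden : 0 < ∑' t, β ^ t * surv A ν τ t :=
    tsum_pow_mul_pos hβ0 hsurv
      (fun t => sum_nonneg fun prof _ => (pProb_mem_unitInterval τ hν t prof).1)
      (sum_pos (fun prof _ => pProb_zero_pos τ hν hfull prof) univ_nonempty)
  exact div_pos hnum hden

end StoppingProblem

theorem gittins_value_eq_synthetic_payoff_general
    (owner : H → ι) (A : H → Type) [∀ h, Fintype (A h)]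
    [∀ h, Nonempty (A h)]
    (payoff : ι → (∀ h, A h) → ℝ)
    (i : ι)
    (F : (∀ h : {h // owner h = i}, A h) → Finset H)
    (si : ∀ h : {h // owner h = i}, A h)
    -- effective discount factor β = δγ ∈ [0,1)
    (β : ℝ) (hβ0 : 0 ≤ β) (hβ1 : β < 1)
    -- a belief over opponents' mixed actions at the s_i-relevant information sets
    (ν : ∀ h : {h // h ∈ F si}, Measure (A h.1 → ℝ)) [∀ h, IsProbabilityMeasure (ν h)]
    (hsimplex : ∀ h, ∀ᵐ α ∂(ν h), (∀ a, 0 ≤ α a) ∧ ∑ a, α a = 1)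
    -- a stopping rule (τ ≥ 1: decisions are made only after at least one observation)
    (τ : List (ProfOn A (F si)) → Bool) :
    Vval A β ν τ (UpayOf A owner payoff i (F si) si) =
      (∑ prof : ProfOn A (F si),
        synth A β ν τ prof * UpayOf A owner payoff i (F si) si prof) ∧
    ((∀ h, FullSupportMeas (ν h)) →
      ∀ prof : ProfOn A (F si), 0 < synth A β ν τ prof) :=
  ⟨Vval_eq_sum_synth_mul τ hsimplex hβ0 hβ1 _, synth_pos τ hsimplex hβ0 hβ1⟩

/-- Lemma: the value of the auxiliary stopping problem defining the Gittins index of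
`s_i` under stopping rule `τ` equals the expected stage-game payoff of `s_i` against
the synthetic correlated profile `α(ν, τ)`; moreover the synthetic correlated profile
is totally mixed whenever the belief has full support. -/
theorem gittins_value_eq_synthetic_payoff
    (owner : H → ι) (A : H → Type) [∀ h, Fintype (A h)] [∀ h, DecidableEq (A h)]
    [∀ h, Nonempty (A h)]
    (payoff : ι → (∀ h, A h) → ℝ)
    (i : ι)
    (F : (∀ h : {h // owner h = i}, A h) → Finset H)
    -- the game is factorable for i
    (hFowner : ∀ si h, h ∈ F si → owner h ≠ i)
    (hFmeas : ∀ si (so so' : ∀ h : {h // owner h ≠ i}, A h),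
      payoff i (combine owner A i si so) = payoff i (combine owner A i si so') ↔
        ∀ (h : H), h ∈ F si → ∀ (hne : owner h ≠ i), so ⟨h, hne⟩ = so' ⟨h, hne⟩)
    (hFdisj : ∀ si si', si ≠ si' → Disjoint (F si) (F si'))
    (si : ∀ h : {h // owner h = i}, A h)
    -- effective discount factor β = δγ ∈ [0,1)
    (β : ℝ) (hβ0 : 0 ≤ β) (hβ1 : β < 1)
    -- a belief over opponents' mixed actions at the s_i-relevant information sets
    (ν : ∀ h : {h // h ∈ F si}, Measure (A h.1 → ℝ)) [∀ h, IsProbabilityMeasure (ν h)]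
    (hsimplex : ∀ h, ∀ᵐ α ∂(ν h), (∀ a, 0 ≤ α a) ∧ ∑ a, α a = 1)
    -- a stopping rule (τ ≥ 1: decisions are made only after at least one observation)
    (τ : List (ProfOn A (F si)) → Bool) :
    Vval A β ν τ (UpayOf A owner payoff i (F si) si) =
      (∑ prof : ProfOn A (F si),
        synth A β ν τ prof * UpayOf A owner payoff i (F si) si prof) ∧
    ((∀ h, FullSupportMeas (ν h)) →
      ∀ prof : ProfOn A (F si), 0 < synth A β ν τ prof) :=
  gittins_value_eq_synthetic_payoff_general owner A payoff i F si β hβ0 hβ1 ν hsimplex τ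
end
end
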